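/- Let H be a real Hilbert space, J : H → ℝ a convex, absolutely one-homogeneous functional, and f ∈ H an eigenfunction, i.e. λ • f ∈ ∂J(f) for some λ > 0. Define v : ℝ → H by v(s) = 0 for s < λ and v(s) = f for s ≥ λ, and q : ℝ → H by q(s) = min(s, λ) • f for s ≥ 0. Then v(0) = 0, q(s) ∈ ∂J(v(s)) for every s ≥ 0, and for every s > 0 with s ≠ λ the function q is differentiable at s with derivative q'(s) = f - v(s). In other words, (v, q) solves the inverse scale space flow ∂ₛq = f - v, q ∈ ∂J(v), v(0) = 0. -/

import Mathlib

/-!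
Absolute one-homogeneity forces `J u = ⟪p, u⟫` for every subgradient `p ∈ ∂J(u)`, so
`∂J(u) ⊆ ∂J(0) = {p | ∀ w, ⟪p, w⟫ ≤ J w}`, and `∂J(0)` is balanced since `J` is even.
Hence `s • f = (s / λ) • (λ • f) ∈ ∂J(0)` for `0 ≤ s ≤ λ`, which is the subgradient condition
before the jump of `v`; after it `q = λ • f ∈ ∂J(f)` is the eigenfunction hypothesis.
Away from `s = λ` the flow `q` is locally linear or constant.
-/

open RealInnerProductSpace

section Subgradient

variable {H : Type*} [NormedAddCommGroup H] [InnerProductSpace ℝ H]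

def IsSubgradient (J : H → ℝ) (u p : H) : Prop :=
  ∀ w : H, J u + ⟪p, w - u⟫ ≤ J w

variable {J : H → ℝ} (hJ : ∀ (c : ℝ) (u : H), J (c • u) = |c| * J u)
include hJ

theorem map_zero_of_absHomogeneous : J 0 = 0 := by
  simpa using hJ 0 0

theorem map_neg_of_absHomogeneous (w : H) : J (-w) = J w := by
  simpa using hJ (-1) w

theorem isSubgradient_zero_iff {p : H} : IsSubgradient J 0 p ↔ ∀ w, ⟪p, w⟫ ≤ J w := by
  simp [IsSubgradient, map_zero_of_absHomogeneous hJ]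

/-- Testing the subgradient inequality at `w = 2 • u` and `w = 0`. -/
theorem IsSubgradient.apply_eq_inner {u p : H} (hp : IsSubgradient J u p) :
    J u = ⟪p, u⟫ := by
  have htwo := hp ((2 : ℝ) • u)
  have hzero := hp 0
  rw [hJ, two_smul, add_sub_cancel_right] at htwo
  rw [map_zero_of_absHomogeneous hJ, zero_sub, inner_neg_right] at hzero
  norm_num at htwo
  linarith

theorem IsSubgradient.isSubgradient_zero {u p : H} (hp : IsSubgradient J u p) :
    IsSubgradient J 0 p := by
  rw [isSubgradient_zero_iff hJ]
  intro w
  have h := hp w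
  rw [hp.apply_eq_inner hJ, inner_sub_right] at h
  linarith

theorem IsSubgradient.smul_of_abs_le_one {p : H} (hp : IsSubgradient J 0 p) {c : ℝ}
    (hc : |c| ≤ 1) : IsSubgradient J 0 (c • p) := by
  rw [isSubgradient_zero_iff hJ] at hp ⊢
  intro w
  have habs : |⟪p, w⟫| ≤ J w := by
    refine abs_le.mpr ⟨?_, hp w⟩
    have := hp (-w)
    rw [inner_neg_right, map_neg_of_absHomogeneous hJ] at this
    linarith
  calc ⟪c • p, w⟫ = c * ⟪p, w⟫ := real_inner_smul_left p w c
    _ ≤ |c| * |⟪p, w⟫| := by rw [← abs_mul]; exact le_abs_self _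
    _ ≤ 1 * J w := by gcongr
    _ = J w := one_mul _

end Subgradient

theorem hasDerivAt_min_smul {E : Type*} [NormedAddCommGroup E] [NormedSpace ℝ E] (f : E)
    {lam s : ℝ} (hs : s ≠ lam) :
    HasDerivAt (fun t : ℝ => min t lam • f) (if s < lam then f else 0) s := by
  rcases hs.lt_or_gt with hlt | hgt
  · rw [if_pos hlt]
    have hev : (fun t : ℝ => min t lam • f) =ᶠ[nhds s] fun t => t • f := by
      filter_upwards [Iio_mem_nhds hlt] with t ht
      rw [min_eq_left ht.le]
    simpa using ((hasDerivAt_id s).smul_const f).congr_of_eventuallyEq hev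
  · rw [if_neg hgt.not_gt]
    have hev : (fun t : ℝ => min t lam • f) =ᶠ[nhds s] fun _ => lam • f := by
      filter_upwards [Ioi_mem_nhds hgt] with t ht
      rw [min_eq_right ht.le]
    exact (hasDerivAt_const s (lam • f)).congr_of_eventuallyEq hev

theorem spectral_stmt6_general {H : Type*} [NormedAddCommGroup H] [InnerProductSpace ℝ H]
    (J : H → ℝ)
    (hJhom : ∀ (c : ℝ) (u : H), J (c • u) = |c| * J u)
    (f : H) (lam : ℝ) (hlam : 0 < lam)
    (heig : ∀ w : H, J f + ⟪lam • f, w - f⟫ ≤ J w)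
    (v q : ℝ → H)
    (hv : ∀ s : ℝ, v s = if s < lam then 0 else f)
    (hq : ∀ s : ℝ, 0 ≤ s → q s = min s lam • f) :
    v 0 = 0 ∧
    (∀ s : ℝ, 0 ≤ s → ∀ w : H, J (v s) + ⟪q s, w - v s⟫ ≤ J w) ∧
    (∀ s : ℝ, 0 < s → s ≠ lam → HasDerivAt q (f - v s) s) := by
  have hsub : IsSubgradient J f (lam • f) := heig
  refine ⟨by simp [hv 0, hlam], fun s hs => ?_, fun s hs hslam => ?_⟩
  · rw [hv s, hq s hs]
    split_ifs with hslt
    · have hscale : |s / lam| ≤ 1 := by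
        rw [abs_of_nonneg (by positivity), div_le_one hlam]
        exact hslt.le
      have h := (hsub.isSubgradient_zero hJhom).smul_of_abs_le_one hJhom hscale
      rwa [smul_smul, div_mul_cancel₀ s hlam.ne', ← min_eq_left hslt.le] at h
    · rwa [min_eq_right (not_lt.mp hslt)]
  · have hqmin : q =ᶠ[nhds s] fun t => min t lam • f := by
      filter_upwards [Ioi_mem_nhds hs] with t ht using hq t ht.le
    rw [hv s]
    convert (hasDerivAt_min_smul f hslam).congr_of_eventuallyEq hqmin using 1
    split_ifs <;> simp

/-- For an eigenfunction `f` of `J` (i.e. `λ • f ∈ ∂J(f)`, `λ > 0`), the pair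
`v(s) = 0` for `s < λ`, `v(s) = f` for `s ≥ λ`, and `q(s) = min(s, λ) • f`, solves the
inverse scale space flow `∂ₛq = f - v`, `q ∈ ∂J(v)`, `v(0) = 0`. -/
theorem spectral_stmt6 {H : Type*} [NormedAddCommGroup H] [InnerProductSpace ℝ H]
    [CompleteSpace H] (J : H → ℝ) (hJconv : ConvexOn ℝ Set.univ J)
    (hJhom : ∀ (c : ℝ) (u : H), J (c • u) = |c| * J u)
    (f : H) (lam : ℝ) (hlam : 0 < lam)
    (heig : ∀ w : H, J f + ⟪lam • f, w - f⟫ ≤ J w)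
    (v q : ℝ → H)
    (hv : ∀ s : ℝ, v s = if s < lam then 0 else f)
    (hq : ∀ s : ℝ, 0 ≤ s → q s = min s lam • f) :
    v 0 = 0 ∧
    (∀ s : ℝ, 0 ≤ s → ∀ w : H, J (v s) + ⟪q s, w - v s⟫ ≤ J w) ∧
    (∀ s : ℝ, 0 < s → s ≠ lam → HasDerivAt q (f - v s) s) :=
  spectral_stmt6_general J hJhom f lam hlam heig v q hv hq
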